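/- Let (P, W, c) be a witness Gabriel drawing of the complete 4-partite graph K_{2,2,2,2}, i.e., c : P → Fin 4 with every color class of size exactly 2 (so |P| = 8), with P ∪ W in general position. Then the points of P are in convex position: every p ∈ P satisfies p ∉ convexHull(P \ {p}). -/

import Mathlib

/-!
Suppose a vertex `p` lies in the convex hull of the other vertices, and let `p'` be the other
vertex of its colour. The non-edge `pp'` has a witness `w ≠ p, p'` in the disk with diameter
`pp'`, so `⟪w - p', w - p⟫ ≤ 0`. Every other vertex `q` has a different colour, so `p'q` is an
edge and `w` is not in the disk with diameter `p'q`: either `q = w` or `⟪w - p', w - q⟫ > 0`.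
These vertices lie in an open half-plane bounded by a line through `w`, together with `w`; that
set is convex, so it also contains `p`, which is a contradiction.
-/

open scoped RealInnerProductSpace

noncomputable section

/-- The Euclidean plane. -/
abbrev Pt := EuclideanSpace ℝ (Fin 2)

/-- The closed disk with diameter `ab`. -/
def diskD (a b : Pt) : Set Pt := Metric.closedBall (midpoint ℝ a b) (dist a b / 2)

/-- `a` and `b` are adjacent in the witness Gabriel graph with witness set `W`. -/
def gabrielEdge (W : Set Pt) (a b : Pt) : Prop := (diskD a b \ {a, b}) ∩ W = ∅

/-- General position: no three points collinear, no four points concyclic. -/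
def GenPos (S : Set Pt) : Prop :=
  (∀ a ∈ S, ∀ b ∈ S, ∀ c ∈ S, a ≠ b → a ≠ c → b ≠ c → ¬ Collinear ℝ ({a, b, c} : Set Pt)) ∧
  (∀ a ∈ S, ∀ b ∈ S, ∀ c ∈ S, ∀ d ∈ S, a ≠ b → a ≠ c → a ≠ d → b ≠ c → b ≠ d → c ≠ d →
    ¬ EuclideanGeometry.Cospherical ({a, b, c, d} : Set Pt))

/-- Planar determinant `u₁v₂ − u₂v₁`. -/
def det2 (u v : Pt) : ℝ := u 0 * v 1 - u 1 * v 0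

/-- Counterclockwise convex position. -/
def CCWConvexPos {m : ℕ} (q : Fin m → Pt) : Prop :=
  ∀ i j k : Fin m, i < j → j < k → 0 < det2 (q j - q i) (q k - q i)

/-- Cyclic successor in `Fin m`. -/
def cyclicSucc {m : ℕ} (hm : 0 < m) (i : Fin m) : Fin m :=
  ⟨((i : ℕ) + 1) % m, Nat.mod_lt _ hm⟩

theorem Finset.exists_eq_pair_of_mem_of_card_eq_two {α : Type*} [DecidableEq α] {s : Finset α}
    {a : α} (hs : s.card = 2) (ha : a ∈ s) : ∃ b, b ≠ a ∧ s = {a, b} := by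
  obtain ⟨x, y, hxy, rfl⟩ := Finset.card_eq_two.1 hs
  rcases Finset.mem_insert.1 ha with rfl | ha
  · exact ⟨y, hxy.symm, rfl⟩
  · rw [Finset.mem_singleton.1 ha]
    exact ⟨x, hxy, Finset.pair_comm x y⟩

theorem convex_insert_setOf_lt {𝕜 E : Type*} [Ring 𝕜] [LinearOrder 𝕜] [IsStrictOrderedRing 𝕜]
    [AddCommGroup E] [Module 𝕜 E] (f : E →ₗ[𝕜] 𝕜) (x : E) :
    Convex 𝕜 (insert x {y | f y < f x}) := by
  have mix : ∀ y, f y < f x → ∀ s t : 𝕜, 0 ≤ s → 0 ≤ t → s + t = 1 →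
      s • x + t • y ∈ insert x {y | f y < f x} := by
    intro y hy s t hs ht hst
    rcases ht.eq_or_lt with rfl | ht
    · simp [show s = 1 by simpa using hst]
    · right
      calc f (s • x + t • y) = s * f x + t * f y := by simp
        _ < s * f x + t * f x := by gcongr
        _ = f x := by rw [← add_mul, hst, one_mul]
  rintro a (rfl | ha) b (rfl | hb) s t hs ht hst
  · simp [← add_smul, hst]
  · exact mix b hb s t hs ht hst
  · rw [add_comm]; exact mix a ha t s ht hs (by rw [add_comm, hst])
  · exact Or.inr (convex_halfSpace_lt f.isLinear _ ha hb hs ht hst)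

section InnerProductSpace

variable {E : Type*} [NormedAddCommGroup E] [InnerProductSpace ℝ E]

theorem eq_or_inner_pos_of_mem_convexHull {S : Set E} {v w p : E}
    (hS : ∀ y ∈ S, y = w ∨ 0 < ⟪v, w - y⟫) (hp : p ∈ convexHull ℝ S) :
    p = w ∨ 0 < ⟪v, w - p⟫ := by
  have hset : insert w {y | innerₛₗ ℝ v y < innerₛₗ ℝ v w} = {y | y = w ∨ 0 < ⟪v, w - y⟫} := by
    ext y
    simp [inner_sub_right]
  have hsub : convexHull ℝ S ⊆ {y | y = w ∨ 0 < ⟪v, w - y⟫} :=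
    hset ▸ convexHull_min (fun y hy ↦ hset ▸ hS y hy) (convex_insert_setOf_lt _ w)
  exact hsub hp

theorem mem_closedBall_midpoint_iff_inner_nonpos (a b w : E) :
    w ∈ Metric.closedBall (midpoint ℝ a b) (dist a b / 2) ↔ ⟪w - a, w - b⟫ ≤ 0 := by
  have apollonius :=
    EuclideanGeometry.dist_sq_add_dist_sq_eq_two_mul_dist_midpoint_sq_add_half_dist_sq w a b
  have cosines : dist a b ^ 2 = dist w a ^ 2 + dist w b ^ 2 - 2 * ⟪w - a, w - b⟫ := by
    have h := norm_sub_sq_real (w - a) (w - b)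
    rw [sub_sub_sub_cancel_left, norm_sub_rev] at h
    simp only [dist_eq_norm]
    linarith
  rw [Metric.mem_closedBall,
    ← pow_le_pow_iff_left₀ dist_nonneg (by positivity) two_ne_zero]
  constructor <;> intro h <;> nlinarith

end InnerProductSpace

theorem mem_diskD_iff (a b w : Pt) : w ∈ diskD a b ↔ ⟪w - a, w - b⟫ ≤ 0 :=
  mem_closedBall_midpoint_iff_inner_nonpos a b w

theorem inner_pos_of_gabrielEdge {W : Set Pt} {a b w : Pt} (h : gabrielEdge W a b) (hw : w ∈ W)
    (hwa : w ≠ a) (hwb : w ≠ b) : 0 < ⟪w - a, w - b⟫ := by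
  by_contra! hle
  have hw' : w ∈ (diskD a b \ {a, b}) ∩ W :=
    ⟨⟨(mem_diskD_iff a b w).2 hle, by simp [hwa, hwb]⟩, hw⟩
  exact Set.eq_empty_iff_forall_notMem.1 h w hw'

theorem K2222_vertices_in_convex_position_general
    (P W : Finset Pt) (c : Pt → Fin 4)
    (hsize : ∀ i : Fin 4, (P.filter (fun p => c p = i)).card = 2)
    (hdraw : ∀ a ∈ P, ∀ b ∈ P, a ≠ b →
      (gabrielEdge (W : Set Pt) a b ↔ c a ≠ c b)) :
    ∀ p ∈ P, p ∉ convexHull ℝ ((P : Set Pt) \ {p}) := by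
  classical
  intro p hp hhull
  obtain ⟨p', hp'p, hclass⟩ := Finset.exists_eq_pair_of_mem_of_card_eq_two (hsize (c p))
    (Finset.mem_filter.2 ⟨hp, rfl⟩)
  have hsame : ∀ q ∈ P, c q = c p → q = p ∨ q = p' := fun q hq h ↦ by
    simpa using hclass.le (Finset.mem_filter.2 ⟨hq, h⟩)
  have hp' : p' ∈ P ∧ c p' = c p := by simpa using hclass.ge (by simp)
  obtain ⟨w, ⟨hwD, hwpp'⟩, hwW⟩ : ((diskD p p' \ {p, p'}) ∩ (W : Set Pt)).Nonempty :=
    Set.nonempty_iff_ne_empty.2 fun h ↦ (hdraw p hp p' hp'.1 hp'p.symm).1 h hp'.2.symm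
  simp only [Set.mem_insert_iff, Set.mem_singleton_iff, not_or] at hwpp'
  have hothers : ∀ q ∈ (P : Set Pt) \ {p}, q = w ∨ 0 < ⟪w - p', w - q⟫ := by
    rintro q ⟨hq, hqp : q ≠ p⟩
    by_cases hqp' : q = p'
    · subst hqp'
      exact Or.inr (real_inner_self_pos.2 (sub_ne_zero.2 hwpp'.2))
    have hcq : c q ≠ c p := fun h ↦ by
      rcases hsame q hq h with rfl | rfl <;> contradiction
    have hedge : gabrielEdge W p' q :=
      (hdraw p' hp'.1 q hq (Ne.symm hqp')).2 (by rw [hp'.2]; exact hcq.symm)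
    by_cases hqw : q = w
    · exact Or.inl hqw
    · exact Or.inr (inner_pos_of_gabrielEdge hedge hwW hwpp'.2 (Ne.symm hqw))
  rcases eq_or_inner_pos_of_mem_convexHull hothers hhull with rfl | hpos
  · exact hwpp'.1 rfl
  · linarith [(mem_diskD_iff p p' w).1 hwD, real_inner_comm (w - p) (w - p')]

/-- Any witness Gabriel drawing of `K_{2,2,2,2}` has its vertices in convex
position. -/
theorem K2222_vertices_in_convex_position
    (P W : Finset Pt) (c : Pt → Fin 4)
    (hcard : P.card = 8)
    (hsize : ∀ i : Fin 4, (P.filter (fun p => c p = i)).card = 2)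
    (hgp : GenPos ((P : Set Pt) ∪ (W : Set Pt)))
    (hdraw : ∀ a ∈ P, ∀ b ∈ P, a ≠ b →
      (gabrielEdge (W : Set Pt) a b ↔ c a ≠ c b)) :
    ∀ p ∈ P, p ∉ convexHull ℝ ((P : Set Pt) \ {p}) :=
  K2222_vertices_in_convex_position_general P W c hsize hdraw
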